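/- arXiv:1704.07870 — 5 statements merged into one kernel-verified Lean document; each statement's English description precedes it below -/
import Mathlib

section
/- Let k be a field containing a primitive n-th root of unity ε, and let F_{N,n} = ∏_{0 ≤ i < j ≤ N} (x_i^n − x_j^n) in k[x_0,…,x_N]. For any 0 ≤ i < j < l ≤ N and 0 ≤ a, b < n, the polynomial F_{N,n} lies in the cube of the prime ideal P = (x_i − ε^a x_j, x_i − ε^b x_l); that is, F_{N,n} ∈ P^3. -/
open MvPolynomial

noncomputable section

/-- `F_{M,n} = ∏_{0 ≤ i < j < M} (x_i^n − x_j^n)` in `k[x_0,…,x_{M-1}]`. -/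
def fermatPoly (k : Type*) [Field k] (M n : ℕ) : MvPolynomial (Fin M) k :=
  ∏ p ∈ Finset.univ.filter (fun p : Fin M × Fin M => p.1 < p.2), (X p.1 ^ n - X p.2 ^ n)

/-- For `N ≥ 2`, `n ≥ 3`, `ε` a primitive `n`-th root of unity, and any
`0 ≤ i < j < l ≤ N`, `0 ≤ a, b < n`, the polynomial `F_{N,n}` lies in the cube of the
ideal `P = (x_i − ε^a x_j, x_i − ε^b x_l)`. -/
theorem stmt3 {k : Type*} [Field k] {n N : ℕ} (hN : 2 ≤ N) (hn : 3 ≤ n) {ε : k}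
    (hε : IsPrimitiveRoot ε n) (i j l : Fin (N + 1)) (hij : i < j) (hjl : j < l)
    (a b : ℕ) (ha : a < n) (hb : b < n) :
    fermatPoly k (N + 1) n ∈
      (Ideal.span {(X i : MvPolynomial (Fin (N + 1)) k) - C (ε ^ a) * X j,
        X i - C (ε ^ b) * X l}) ^ 3 := by
  set P : Ideal (MvPolynomial (Fin (N + 1)) k) :=
    Ideal.span {(X i : MvPolynomial (Fin (N + 1)) k) - C (ε ^ a) * X j,
      X i - C (ε ^ b) * X l} with hP
  have hf : (X i : MvPolynomial (Fin (N + 1)) k) - C (ε ^ a) * X j ∈ P :=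
    Ideal.subset_span (by simp)
  have hg : (X i : MvPolynomial (Fin (N + 1)) k) - C (ε ^ b) * X l ∈ P :=
    Ideal.subset_span (by simp)
  have hpow : ∀ m : ℕ, (ε ^ m) ^ n = 1 := fun m => by
    rw [← pow_mul, mul_comm, pow_mul, hε.pow_eq_one, one_pow]
  -- divisibility fact
  have key : ∀ (c : k) (u v : Fin (N + 1)), c ^ n = 1 →
      ((X u : MvPolynomial (Fin (N + 1)) k) - C c * X v) ∣ (X u ^ n - X v ^ n) := by
    intro c u v hc
    have : (X u : MvPolynomial (Fin (N + 1)) k) ^ n - X v ^ n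
        = X u ^ n - (C c * X v) ^ n := by
      rw [mul_pow, ← C_pow, hc, C_1, one_mul]
    rw [this]
    exact sub_dvd_pow_sub_pow _ _ n
  -- third linear form
  set c : k := ε ^ (n - a) * ε ^ b with hc
  have hc1 : c ^ n = 1 := by rw [hc, mul_pow, hpow, hpow, one_mul]
  have h3mem : (X j : MvPolynomial (Fin (N + 1)) k) - C c * X l ∈ P := by
    have h1 : (C (ε ^ (n - a)) : MvPolynomial (Fin (N + 1)) k) * C (ε ^ a) = 1 := by
      rw [← C_mul, ← pow_add, Nat.sub_add_cancel ha.le, hε.pow_eq_one, C_1]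
    have heq : (X j : MvPolynomial (Fin (N + 1)) k) - C c * X l
        = C (ε ^ (n - a)) * ((X i - C (ε ^ b) * X l) - (X i - C (ε ^ a) * X j)) := by
      rw [hc, C_mul]
      linear_combination (-(X j) : MvPolynomial (Fin (N + 1)) k) * h1
    rw [heq]
    exact Ideal.mul_mem_left _ _ (Ideal.sub_mem _ hg hf)
  have h1mem : (X i : MvPolynomial (Fin (N + 1)) k) ^ n - X j ^ n ∈ P :=
    (Ideal.span_singleton_le_iff_mem P |>.mpr hf) (Ideal.mem_span_singleton.mpr (key _ i j (hpow a)))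
  have h2mem : (X i : MvPolynomial (Fin (N + 1)) k) ^ n - X l ^ n ∈ P :=
    (Ideal.span_singleton_le_iff_mem P |>.mpr hg) (Ideal.mem_span_singleton.mpr (key _ i l (hpow b)))
  have h3mem' : (X j : MvPolynomial (Fin (N + 1)) k) ^ n - X l ^ n ∈ P :=
    (Ideal.span_singleton_le_iff_mem P |>.mpr h3mem) (Ideal.mem_span_singleton.mpr (key c j l hc1))
  -- the three pairs
  set S := Finset.univ.filter (fun p : Fin (N + 1) × Fin (N + 1) => p.1 < p.2) with hS
  have hsub : ({(i, j), (i, l), (j, l)} : Finset (Fin (N + 1) × Fin (N + 1))) ⊆ S := by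
    intro p hp
    simp only [Finset.mem_insert, Finset.mem_singleton] at hp
    rcases hp with h | h | h <;> subst h <;>
      simp [hS, hij, hjl, hij.trans hjl]
  have hdvd : (∏ p ∈ ({(i, j), (i, l), (j, l)} : Finset (Fin (N + 1) × Fin (N + 1))),
      ((X p.1 : MvPolynomial (Fin (N + 1)) k) ^ n - X p.2 ^ n)) ∣ fermatPoly k (N + 1) n :=
    Finset.prod_dvd_prod_of_subset _ _ _ hsub
  obtain ⟨r, hr⟩ := hdvd
  have hne1 : ((i, j) : Fin (N + 1) × Fin (N + 1)) ∉
      ({(i, l), (j, l)} : Finset (Fin (N + 1) × Fin (N + 1))) := by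
    simp [Prod.ext_iff, hjl.ne, hij.ne]
  have hne2 : ((i, l) : Fin (N + 1) × Fin (N + 1)) ∉
      ({(j, l)} : Finset (Fin (N + 1) × Fin (N + 1))) := by
    simp [Prod.ext_iff, hij.ne]
  rw [hr, Finset.prod_insert hne1, Finset.prod_insert hne2, Finset.prod_singleton]
  refine Ideal.mul_mem_right r _ ?_
  have : ((X i : MvPolynomial (Fin (N + 1)) k) ^ n - X j ^ n) *
      ((X i ^ n - X l ^ n) * (X j ^ n - X l ^ n)) ∈ P * (P * P) :=
    Ideal.mul_mem_mul h1mem (Ideal.mul_mem_mul h2mem h3mem')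
  have hcube : P ^ 3 = P * (P * P) := by ring
  rw [hcube]
  exact this

end
end

section
/- Let k be a field containing a primitive n-th root of unity ε, with n ≥ 3, and define in S_N = k[x_0,…,x_N]: C_{N,n} = ⋂_{0≤i<j≤N} (x_i, x_j), J_{N,n} = ⋂_{0≤i<j<l≤N, 0≤a,b<n} (x_i − ε^a x_j, x_i − ε^b x_l), and I_{N,n} = J_{N,n} ∩ C_{N,n}. Then F_{N,n} = ∏_{0≤i<j≤N}(x_i^n − x_j^n) lies in the third symbolic power I_{N,n}^{(3)}. -/
/-!
`I_{N,n}` is a finite intersection of primes: the planes `(x_i, x_j)` and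
`(x_i − ε^a x_j, x_i − ε^b x_l)`, each the kernel of a linear substitution. For such an
intersection `I = ⋂ Q`, every associated prime `p` of `R/I` is one of the `Q` and equals `(I : f)`
for some `f ∉ p`; so `x ∈ p^r` gives `f^r x ∈ I^r`, i.e. `x ∈ I^r R_p ∩ R`. It remains to see
`F_{N,n} ∈ Q^3` for every component `Q`: `x_i^n − x_j^n ∈ (x_i, x_j)^n ⊆ (x_i, x_j)^3` as `n ≥ 3`,
and the three factors of `F_{N,n}` indexed by pairs from `{i, j, l}` all lie in
`(x_i − ε^a x_j, x_i − ε^b x_l)`, because `ε^a` and `ε^b` are `n`-th roots of unity.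
-/

open MvPolynomial

noncomputable section

/-- `C_{M,n} = ⋂_{i<j} (x_i, x_j)`. -/
def cevaC (k : Type*) [Field k] (M : ℕ) : Ideal (MvPolynomial (Fin M) k) :=
  ⨅ (i : Fin M) (j : Fin M) (_ : i < j), Ideal.span {X i, X j}

/-- `J_{M,n} = ⋂_{i<j<l, 0≤a,b<n} (x_i − ε^a x_j, x_i − ε^b x_l)`. -/
def cevaJ (k : Type*) [Field k] (M n : ℕ) (ε : k) : Ideal (MvPolynomial (Fin M) k) :=
  ⨅ (i : Fin M) (j : Fin M) (l : Fin M) (_ : i < j) (_ : j < l) (a : Fin n) (b : Fin n),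
    Ideal.span {X i - C (ε ^ (a : ℕ)) * X j, X i - C (ε ^ (b : ℕ)) * X l}

/-- `I_{M,n} = J_{M,n} ∩ C_{M,n}`. -/
def cevaI (k : Type*) [Field k] (M n : ℕ) (ε : k) : Ideal (MvPolynomial (Fin M) k) :=
  cevaJ k M n ε ⊓ cevaC k M

/-- The `r`-th symbolic power of `I`: the intersection, over the associated primes `p` of
`R/I`, of the contraction of `I^r R_p` back to `R` along the localization map `R → R_p`. -/
def symbolicPower {R : Type*} [CommRing R] (I : Ideal R) (r : ℕ) : Ideal R :=
  sInf { K : Ideal R | ∃ (p : Ideal R) (hp : p ∈ associatedPrimes R (R ⧸ I)),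
    K = Ideal.comap (algebraMap R (Localization (@Ideal.primeCompl R _ p hp.1)))
        (Ideal.map (algebraMap R (Localization (@Ideal.primeCompl R _ p hp.1))) (I ^ r)) }

namespace Ideal

variable {R : Type*} [CommRing R]

theorem exists_eq_sInf_notMem_of_mem_associatedPrimes {𝒬 : Set (Ideal R)}
    (h𝒬 : ∀ Q ∈ 𝒬, Q.IsPrime) {p : Ideal R} (hp : p ∈ associatedPrimes R (R ⧸ sInf 𝒬)) :
    ∃ f : R, p = sInf {Q ∈ 𝒬 | f ∉ Q} := by
  obtain ⟨-, x, hx⟩ := hp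
  obtain ⟨f, rfl⟩ := Ideal.Quotient.mk_surjective x
  have hcolon (y : R) : y ∈ (⊥ : Submodule R (R ⧸ sInf 𝒬)).colon {Quotient.mk _ f} ↔
      ∀ Q ∈ 𝒬, y * f ∈ Q := by
    rw [Submodule.mem_colon_singleton, Submodule.mem_bot, Algebra.smul_def,
      Quotient.algebraMap_eq, ← map_mul, Quotient.eq_zero_iff_mem, Submodule.mem_sInf]
  refine ⟨f, hx.trans (le_antisymm ?_ ?_)⟩
  · rintro y ⟨m, hy⟩
    rw [Submodule.mem_sInf]
    rintro Q ⟨hQ, hfQ⟩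
    have hQ' := h𝒬 Q hQ
    exact hQ'.mem_of_pow_mem m ((hQ'.mem_or_mem ((hcolon _).1 hy Q hQ)).resolve_right hfQ)
  · intro y hy
    refine ⟨1, (hcolon _).2 fun Q hQ => ?_⟩
    by_cases hfQ : f ∈ Q
    · exact Q.mul_mem_left _ hfQ
    · exact Q.mul_mem_right f (by simpa using Submodule.mem_sInf.1 hy Q ⟨hQ, hfQ⟩)

theorem sInf_mem_of_isPrime {𝒮 : Set (Ideal R)} (h𝒮 : 𝒮.Finite) (hp : (sInf 𝒮).IsPrime) :
    sInf 𝒮 ∈ 𝒮 := by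
  rw [← h𝒮.coe_toFinset, ← Finset.inf_id_eq_sInf] at hp ⊢
  obtain ⟨Q, hQ, hQeq⟩ := eq_inf_of_isPrime_inf hp
  exact hQeq ▸ hQ

end Ideal

open Ideal in
theorem mem_symbolicPower_sInf {R : Type*} [CommRing R] {𝒬 : Set (Ideal R)}
    (h𝒬fin : 𝒬.Finite) (h𝒬 : ∀ Q ∈ 𝒬, Q.IsPrime) {r : ℕ} {x : R} (hx : ∀ Q ∈ 𝒬, x ∈ Q ^ r) :
    x ∈ symbolicPower (sInf 𝒬) r := by
  refine Submodule.mem_sInf.2 ?_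
  rintro _ ⟨p, hp, rfl⟩
  obtain ⟨f, hpf⟩ := exists_eq_sInf_notMem_of_mem_associatedPrimes h𝒬 hp
  obtain ⟨hp𝒬, hfp⟩ : p ∈ {Q ∈ 𝒬 | f ∉ Q} :=
    hpf ▸ sInf_mem_of_isPrime (h𝒬fin.subset fun _ hQ => hQ.1) (hpf ▸ hp.1)
  have hfI : span {f} * p ≤ sInf 𝒬 := by
    refine mul_le.2 fun a ha y hy => Submodule.mem_sInf.2 fun Q hQ => ?_
    rw [hpf, Submodule.mem_sInf] at hy
    obtain ⟨c, rfl⟩ := mem_span_singleton'.1 ha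
    by_cases hfQ : f ∈ Q
    · exact Ideal.mul_mem_right y Q (Ideal.mul_mem_left Q c hfQ)
    · exact Ideal.mul_mem_left Q _ (hy Q ⟨hQ, hfQ⟩)
  have : p.IsPrime := hp.1
  rw [mem_comap, IsLocalization.algebraMap_mem_map_algebraMap_iff p.primeCompl]
  refine ⟨f ^ r, fun h => hfp (this.mem_of_pow_mem r h), pow_right_mono hfI r ?_⟩
  rw [mul_pow]
  exact mul_mem_mul (pow_mem_pow (mem_span_singleton_self f) r) (hx p hp𝒬)

theorem mul_sub_mul_dvd_pow_sub_pow {A : Type*} [CommRing A] {c d : A} {n : ℕ} (hc : c ^ n = 1)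
    (hd : d ^ n = 1) (a b : A) : c * a - d * b ∣ a ^ n - b ^ n := by
  simpa [mul_pow, hc, hd] using sub_dvd_pow_sub_pow (c * a) (d * b) n

namespace MvPolynomial

variable {σ R : Type*} [CommRing R]

theorem span_eq_ker_of_X_sub_mem_span {S : Set (MvPolynomial σ R)}
    (φ : MvPolynomial σ R →ₐ[R] MvPolynomial σ R) (hS : ∀ g ∈ S, φ g = 0)
    (hX : ∀ v, X v - φ (X v) ∈ Ideal.span S) : Ideal.span S = RingHom.ker φ := by
  refine le_antisymm (Ideal.span_le.2 hS) fun f hf => ?_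
  have hmk :
      (Ideal.Quotient.mkₐ R (Ideal.span S)).comp φ = Ideal.Quotient.mkₐ R (Ideal.span S) :=
    algHom_ext fun v => (Ideal.Quotient.mk_eq_mk_iff_sub_mem _ _).2 <| by
      simpa using (Ideal.span S).neg_mem (hX v)
  have := AlgHom.congr_fun hmk f
  rw [AlgHom.comp_apply, (RingHom.mem_ker).1 hf, map_zero, Ideal.Quotient.mkₐ_eq_mk] at this
  exact Ideal.Quotient.eq_zero_iff_mem.1 this.symm

theorem isPrime_span_X_pair [IsDomain R] (i j : σ) :
    (Ideal.span {X i, X j} : Ideal (MvPolynomial σ R)).IsPrime := by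
  classical
  let φ : MvPolynomial σ R →ₐ[R] MvPolynomial σ R :=
    aeval (Function.update (Function.update X i 0) j 0)
  have hφ : Ideal.span {X i, X j} = RingHom.ker φ := by
    refine span_eq_ker_of_X_sub_mem_span φ ?_ fun v => ?_
    · rintro g (rfl | rfl) <;> by_cases hij : i = j <;> simp [φ, hij]
    · simp only [φ, aeval_X, Function.update_apply]
      split_ifs with hvj hvi
      · simpa [hvj] using Ideal.subset_span (by simp)
      · simpa [hvi] using Ideal.subset_span (by simp)
      · simp
  rw [hφ]
  exact RingHom.ker_isPrime _

theorem isPrime_span_X_sub_C_mul_X_pair {k : Type*} [Field k] {i j l : σ} (hij : i ≠ j)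
    (hil : i ≠ l) (hjl : j ≠ l) {c : k} (hc : c ≠ 0) (d : k) :
    (Ideal.span {X i - C c * X j, X i - C d * X l} : Ideal (MvPolynomial σ k)).IsPrime := by
  classical
  let φ : MvPolynomial σ k →ₐ[k] MvPolynomial σ k :=
    aeval (Function.update (Function.update X i (C d * X l)) j (C (c⁻¹ * d) * X l))
  have hφi : φ (X i) = C d * X l := by simp [φ, hij]
  have hφj : φ (X j) = C (c⁻¹ * d) * X l := by simp [φ]
  have hφl : φ (X l) = X l := by simp [φ, hil.symm, hjl.symm]
  have hcc : C c⁻¹ * C c = (1 : MvPolynomial σ k) := by rw [← C_mul, inv_mul_cancel₀ hc, C_1]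
  have hφ : Ideal.span {X i - C c * X j, X i - C d * X l} = RingHom.ker φ := by
    refine span_eq_ker_of_X_sub_mem_span φ ?_ fun v => ?_
    · rintro g (rfl | rfl)
      · rw [map_sub, map_mul, hφi, hφj, show φ (C c) = C c from aeval_C _ _, C_mul]
        linear_combination (-(C d * X l)) * hcc
      · simp [hφi, hφl]
    · have hg₁ : X i - C c * X j ∈ Ideal.span {X i - C c * X j, X i - C d * X l} :=
        Ideal.subset_span (by simp)
      have hg₂ : X i - C d * X l ∈ Ideal.span {X i - C c * X j, X i - C d * X l} :=
        Ideal.subset_span (by simp)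
      by_cases hvi : v = i
      · rwa [hvi, hφi]
      by_cases hvj : v = j
      · rw [hvj, hφj, C_mul]
        convert Ideal.mul_mem_left _ (C c⁻¹) (Ideal.sub_mem _ hg₂ hg₁) using 1
        linear_combination (-X j) * hcc
      · simp [φ, hvi, hvj]
  rw [hφ]
  exact RingHom.ker_isPrime _

end MvPolynomial

section Ceva

variable {k : Type*} [Field k] {M n : ℕ}

theorem X_pow_sub_X_pow_dvd_fermatPoly {i j : Fin M} (hij : i < j) :
    X i ^ n - X j ^ n ∣ fermatPoly k M n := by
  unfold fermatPoly
  exact Finset.dvd_prod_of_mem (a := (i, j)) _ (by simpa using hij)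

theorem X_pow_sub_X_pow_mul_mul_dvd_fermatPoly {i j l : Fin M} (hij : i < j) (hjl : j < l) :
    (X i ^ n - X j ^ n) * (X i ^ n - X l ^ n) * (X j ^ n - X l ^ n) ∣ fermatPoly k M n := by
  have hsub :
      {(i, j), (i, l), (j, l)} ⊆ Finset.univ.filter (fun p : Fin M × Fin M => p.1 < p.2) := by
    simp [Finset.insert_subset_iff, hij, hjl, hij.trans hjl]
  unfold fermatPoly
  convert Finset.prod_dvd_prod_of_subset _ _ (fun p : Fin M × Fin M => X p.1 ^ n - X p.2 ^ n) hsub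
    using 1
  rw [Finset.prod_insert (by simp [hjl.ne]), Finset.prod_insert (by simp [hij.ne]),
    Finset.prod_singleton, mul_assoc]

def cevaComponents (k : Type*) [Field k] (M n : ℕ) (ε : k) :
    Set (Ideal (MvPolynomial (Fin M) k)) :=
  (⋃ (i : Fin M) (j : Fin M) (l : Fin M) (_ : i < j) (_ : j < l) (a : Fin n) (b : Fin n),
      {Ideal.span {X i - C (ε ^ (a : ℕ)) * X j, X i - C (ε ^ (b : ℕ)) * X l}}) ∪
    ⋃ (i : Fin M) (j : Fin M) (_ : i < j), {Ideal.span {X i, X j}}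

variable {ε : k}

theorem cevaI_eq_sInf_cevaComponents : cevaI k M n ε = sInf (cevaComponents k M n ε) := by
  simp_rw [cevaComponents, sInf_union, sInf_eq_iInf, iInf_iUnion, iInf_singleton]
  rfl

theorem cevaComponents_finite : (cevaComponents k M n ε).Finite := by
  unfold cevaComponents
  exact Set.toFinite _

theorem isPrime_of_mem_cevaComponents (hε : ε ≠ 0) {Q : Ideal (MvPolynomial (Fin M) k)}
    (hQ : Q ∈ cevaComponents k M n ε) : Q.IsPrime := by
  simp only [cevaComponents, Set.mem_union, Set.mem_iUnion, Set.mem_singleton_iff] at hQ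
  rcases hQ with ⟨i, j, l, hij, hjl, a, b, rfl⟩ | ⟨i, j, -, rfl⟩
  · exact isPrime_span_X_sub_C_mul_X_pair hij.ne (hij.trans hjl).ne hjl.ne (pow_ne_zero _ hε) _
  · exact isPrime_span_X_pair i j

theorem fermatPoly_mem_pow_three_of_mem_cevaComponents (hn : 3 ≤ n) (hε : ε ^ n = 1)
    {Q : Ideal (MvPolynomial (Fin M) k)} (hQ : Q ∈ cevaComponents k M n ε) :
    fermatPoly k M n ∈ Q ^ 3 := by
  simp only [cevaComponents, Set.mem_union, Set.mem_iUnion, Set.mem_singleton_iff] at hQ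
  rcases hQ with ⟨i, j, l, hij, hjl, a, b, rfl⟩ | ⟨i, j, hij, rfl⟩
  · set Q := Ideal.span {X i - C (ε ^ (a : ℕ)) * X j, X i - C (ε ^ (b : ℕ)) * X l}
    have hroot (e : ℕ) : (C (ε ^ e) : MvPolynomial (Fin M) k) ^ n = 1 := by
      rw [← C_pow, ← pow_mul, mul_comm, pow_mul, hε, one_pow, C_1]
    have hg₁ : 1 * X i - C (ε ^ (a : ℕ)) * X j ∈ Q := by
      rw [one_mul]; exact Ideal.subset_span (by simp)
    have hg₂ : 1 * X i - C (ε ^ (b : ℕ)) * X l ∈ Q := by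
      rw [one_mul]; exact Ideal.subset_span (by simp)
    have hg₃ : C (ε ^ (a : ℕ)) * X j - C (ε ^ (b : ℕ)) * X l ∈ Q := by
      convert Q.sub_mem hg₂ hg₁ using 1; ring
    refine (Q ^ 3).mem_of_dvd (X_pow_sub_X_pow_mul_mul_dvd_fermatPoly hij hjl) ?_
    rw [pow_three']
    exact Ideal.mul_mem_mul (Ideal.mul_mem_mul
      (Q.mem_of_dvd (mul_sub_mul_dvd_pow_sub_pow (one_pow n) (hroot _) _ _) hg₁)
      (Q.mem_of_dvd (mul_sub_mul_dvd_pow_sub_pow (one_pow n) (hroot _) _ _) hg₂))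
      (Q.mem_of_dvd (mul_sub_mul_dvd_pow_sub_pow (hroot _) (hroot _) _ _) hg₃)
  · refine Ideal.mem_of_dvd _ (X_pow_sub_X_pow_dvd_fermatPoly hij)
      (Ideal.pow_le_pow_right hn (sub_mem (Ideal.pow_mem_pow ?_ n) (Ideal.pow_mem_pow ?_ n))) <;>
    exact Ideal.subset_span (by simp)

end Ceva

/-- For `n ≥ 3` and a primitive `n`-th root of unity `ε ∈ k`, the Fermat
product `F_{N,n}` lies in the third symbolic power of `I_{N,n} = J_{N,n} ∩ C_{N,n}`. -/
theorem stmt5 {k : Type*} [Field k] {n N : ℕ} (hn : 3 ≤ n) {ε : k}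
    (hε : IsPrimitiveRoot ε n) :
    fermatPoly k (N + 1) n ∈ symbolicPower (cevaI k (N + 1) n ε) 3 := by
  rw [cevaI_eq_sInf_cevaComponents]
  exact mem_symbolicPower_sInf cevaComponents_finite
    (fun Q hQ => isPrime_of_mem_cevaComponents (hε.ne_zero (by omega)) hQ)
    (fun Q hQ => fermatPoly_mem_pow_three_of_mem_cevaComponents hn hε.pow_eq_one hQ)

end
end

section
/- Let k be a field containing a primitive n-th root of unity ε, and let π : k[x_0,…,x_N] → k[x_0,…,x_{N−1}] be the k-algebra evaluation homomorphism sending x_N ↦ 1 and x_i ↦ x_i for i < N. With I_{N,n} = C_{N,n} ∩ J_{N,n} as defined from the Fermat arrangement, π(I_{N,n}) ⊆ I_{N−1,n}. -/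
open MvPolynomial

noncomputable section

/-- The evaluation homomorphism `k[x_0,…,x_N] → k[x_0,…,x_{N−1}]` sending `x_N ↦ 1` and
`x_i ↦ x_i` for `i < N`. -/
def evalLastOne (k : Type*) [Field k] (N : ℕ) :
    MvPolynomial (Fin (N + 1)) k →+* MvPolynomial (Fin N) k :=
  (aeval (fun i : Fin (N + 1) => if h : (i : ℕ) < N then (X ⟨i, h⟩ : MvPolynomial (Fin N) k)
    else 1)).toRingHom

lemma evalLastOne_X_castSucc {k : Type*} [Field k] {N : ℕ} (i : Fin N) :
    evalLastOne k N (X i.castSucc) = X i := by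
  simp [evalLastOne]

lemma evalLastOne_C {k : Type*} [Field k] {N : ℕ} (c : k) :
    evalLastOne k N (C c) = C c := by
  simp [evalLastOne]

/-- For `N ≥ 3` and a primitive `n`-th root of unity `ε ∈ k`, the evaluation
map `π : k[x_0,…,x_N] → k[x_0,…,x_{N−1}]`, `x_N ↦ 1`, `x_i ↦ x_i` for `i < N`, satisfies
`π(I_{N,n}) ⊆ I_{N−1,n}`. -/
theorem stmt6 {k : Type*} [Field k] {n N : ℕ} (hN : 3 ≤ N) {ε : k}
    (hε : IsPrimitiveRoot ε n) :
    Ideal.map (evalLastOne k N) (cevaI k (N + 1) n ε) ≤ cevaI k N n ε := by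
  rw [Ideal.map_le_iff_le_comap]
  intro f hf
  rw [cevaI, Ideal.mem_inf] at hf
  obtain ⟨hJ, hC⟩ := hf
  simp only [cevaJ, Submodule.mem_iInf] at hJ
  simp only [cevaC, Submodule.mem_iInf] at hC
  refine Ideal.mem_comap.2 (Ideal.mem_inf.2 ⟨?_, ?_⟩)
  · simp only [cevaJ, Submodule.mem_iInf]
    intro i j l hij hjl a b
    have h := hJ i.castSucc j.castSucc l.castSucc
      (by simpa using hij) (by simpa using hjl) a b
    have hmap : Ideal.map (evalLastOne k N)
        (Ideal.span {X i.castSucc - C (ε ^ (a : ℕ)) * X j.castSucc,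
          X i.castSucc - C (ε ^ (b : ℕ)) * X l.castSucc}) ≤
        Ideal.span {X i - C (ε ^ (a : ℕ)) * X j, X i - C (ε ^ (b : ℕ)) * X l} := by
      rw [Ideal.map_span, Set.image_insert_eq, Set.image_singleton,
        map_sub, map_sub, map_mul, map_mul, evalLastOne_C, evalLastOne_C,
        evalLastOne_X_castSucc, evalLastOne_X_castSucc, evalLastOne_X_castSucc]
    exact hmap (Ideal.mem_map_of_mem _ h)
  · simp only [cevaC, Submodule.mem_iInf]
    intro i j hij
    have h := hC i.castSucc j.castSucc (by simpa using hij)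
    have hmap : Ideal.map (evalLastOne k N)
        (Ideal.span {X i.castSucc, X j.castSucc}) ≤ Ideal.span {X i, X j} := by
      rw [Ideal.map_span, Set.image_insert_eq, Set.image_singleton,
        evalLastOne_X_castSucc, evalLastOne_X_castSucc]
    exact hmap (Ideal.mem_map_of_mem _ h)
end
end

section
/- Let k be a field containing a primitive n-th root of unity ε, with n ≥ 3. Suppose (i,j,l) and (i',j',l') are triples with 0 ≤ i < j < l ≤ N and 0 ≤ i' < j' < l' ≤ N, and 0 ≤ a,b,a',b' < n. If the ideals (x_i − ε^a x_j, x_i − ε^b x_l) and (x_{i'} − ε^{a'} x_{j'}, x_{i'} − ε^{b'} x_{l'}) in k[x_0,…,x_N] are equal, then (i,j,l) = (i',j',l') and (a,b) = (a',b'). -/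
open MvPolynomial

/-- Auxiliary: points vanishing on the first pair of linear forms also vanish on the
second pair when the spanned ideals are equal. -/
theorem stmt10_transfer {k : Type*} [Field k] {N : ℕ} (i j l i' j' l' : Fin (N+1))
    (c d c' d' : k)
    (heq : Ideal.span {(X i : MvPolynomial (Fin (N+1)) k) - C c * X j, X i - C d * X l}
         = Ideal.span {(X i' : MvPolynomial (Fin (N+1)) k) - C c' * X j', X i' - C d' * X l'})
    (v : Fin (N+1) → k) (h1 : v i = c * v j) (h2 : v i = d * v l) :
    v i' = c' * v j' ∧ v i' = d' * v l' := by
  have hker : Ideal.span {(X i : MvPolynomial (Fin (N+1)) k) - C c * X j, X i - C d * X l}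
      ≤ RingHom.ker (eval v) := by
    rw [Ideal.span_le]
    rintro p (rfl | rfl) <;>
      simp only [SetLike.mem_coe, RingHom.mem_ker, map_sub, map_mul, eval_X, eval_C,
        sub_eq_zero] <;> [exact h1; exact h2]
  rw [heq, Ideal.span_le] at hker
  have g1 := hker (Set.mem_insert _ _)
  have g2 := hker (Set.mem_insert_of_mem _ (Set.mem_singleton _))
  simp only [SetLike.mem_coe, RingHom.mem_ker, map_sub, map_mul, eval_X, eval_C,
    sub_eq_zero] at g1 g2
  exact ⟨g1, g2⟩

/-- Auxiliary: each of `i', j', l'` lies in `{i, j, l}` given the transfer property. -/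
theorem stmt10_mem {k : Type*} [Field k] {N : ℕ} (i j l i' j' l' : Fin (N+1))
    (hij' : i' < j') (hjl' : j' < l') (c d c' d' : k) (hc' : c' ≠ 0) (hd' : d' ≠ 0)
    (key : ∀ v : Fin (N+1) → k, v i = c * v j → v i = d * v l →
      v i' = c' * v j' ∧ v i' = d' * v l') :
    (i' = i ∨ i' = j ∨ i' = l) ∧ (j' = i ∨ j' = j ∨ j' = l) ∧ (l' = i ∨ l' = j ∨ l' = l) := by
  refine ⟨?_, ?_, ?_⟩
  · by_contra h
    push_neg at h
    obtain ⟨h1, h2, h3⟩ := h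
    set v : Fin (N+1) → k := fun x => if x = i' then 1 else 0 with hv
    have hk := key v (by simp [hv, h1.symm, h2.symm]) (by simp [hv, h1.symm, h3.symm])
    rw [hv] at hk
    simp only [if_pos rfl] at hk
    have : j' ≠ i' := hij'.ne'
    simp [this] at hk
  · by_contra h
    push_neg at h
    obtain ⟨h1, h2, h3⟩ := h
    set v : Fin (N+1) → k := fun x => if x = j' then 1 else 0 with hv
    have hk := key v (by simp [hv, h1.symm, h2.symm]) (by simp [hv, h1.symm, h3.symm])
    rw [hv] at hk
    have hne : i' ≠ j' := hij'.ne
    simp [hne] at hk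
    exact hc' hk.1.symm
  · by_contra h
    push_neg at h
    obtain ⟨h1, h2, h3⟩ := h
    set v : Fin (N+1) → k := fun x => if x = l' then 1 else 0 with hv
    have hk := key v (by simp [hv, h1.symm, h2.symm]) (by simp [hv, h1.symm, h3.symm])
    rw [hv] at hk
    have hne : i' ≠ l' := (hij'.trans hjl').ne
    simp [hne] at hk
    exact hd' hk.2.symm

/-- For `n ≥ 3` and a primitive `n`-th root of unity `ε ∈ k`, if triples
`i < j < l`, `i' < j' < l'` in `{0,…,N}` and exponents `a, b, a', b' < n` give equal
ideals `(x_i − ε^a x_j, x_i − ε^b x_l) = (x_{i'} − ε^{a'} x_{j'}, x_{i'} − ε^{b'} x_{l'})`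
in `k[x_0,…,x_N]`, then `(i,j,l) = (i',j',l')` and `(a,b) = (a',b')`. -/
theorem stmt10 {k : Type*} [Field k] {n N : ℕ} (hn : 3 ≤ n) {ε : k}
    (hε : IsPrimitiveRoot ε n)
    (i j l i' j' l' : Fin (N + 1)) (hij : i < j) (hjl : j < l) (hij' : i' < j')
    (hjl' : j' < l') (a b a' b' : ℕ) (ha : a < n) (hb : b < n) (ha' : a' < n)
    (hb' : b' < n)
    (heq : Ideal.span {(X i : MvPolynomial (Fin (N + 1)) k) - C (ε ^ a) * X j,
        X i - C (ε ^ b) * X l} =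
      Ideal.span {(X i' : MvPolynomial (Fin (N + 1)) k) - C (ε ^ a') * X j',
        X i' - C (ε ^ b') * X l'}) :
    i = i' ∧ j = j' ∧ l = l' ∧ a = a' ∧ b = b' := by
  have hε0 : ε ≠ 0 := hε.ne_zero (by omega)
  have key := stmt10_transfer i j l i' j' l' (ε ^ a) (ε ^ b) (ε ^ a') (ε ^ b') heq
  have key' := stmt10_transfer i' j' l' i j l (ε ^ a') (ε ^ b') (ε ^ a) (ε ^ b) heq.symm
  obtain ⟨hi', hj', hl'⟩ := stmt10_mem i j l i' j' l' hij' hjl' _ _ _ _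
    (pow_ne_zero _ hε0) (pow_ne_zero _ hε0) key
  obtain ⟨hi, hj, hl⟩ := stmt10_mem i' j' l' i j l hij hjl _ _ _ _
    (pow_ne_zero _ hε0) (pow_ne_zero _ hε0) key'
  have hii' : i = i' := le_antisymm
    (by rcases hi' with rfl | rfl | rfl
        · exact le_refl _
        · exact hij.le
        · exact (hij.trans hjl).le)
    (by rcases hi with rfl | rfl | rfl
        · exact le_refl _
        · exact hij'.le
        · exact (hij'.trans hjl').le)
  have hll' : l = l' := le_antisymm
    (by rcases hl with rfl | rfl | rfl
        · exact (hij'.trans hjl').le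
        · exact hjl'.le
        · exact le_refl _)
    (by rcases hl' with rfl | rfl | rfl
        · exact (hij.trans hjl).le
        · exact hjl.le
        · exact le_refl _)
  obtain rfl := hii'
  obtain rfl := hll'
  have hjj' : j = j' := by
    rcases hj with rfl | rfl | rfl
    · exact absurd hij (lt_irrefl _)
    · rfl
    · exact absurd hjl (lt_irrefl _)
  obtain rfl := hjj'
  refine ⟨rfl, rfl, rfl, ?_, ?_⟩
  all_goals {
    have hji : j ≠ i := hij.ne'
    have hli : l ≠ i := (hij.trans hjl).ne'
    have hlj : l ≠ j := hjl.ne'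
    set v : Fin (N + 1) → k := fun x =>
      if x = i then ε ^ a * ε ^ b else if x = j then ε ^ b else if x = l then ε ^ a else 0
      with hv
    have hvi : v i = ε ^ a * ε ^ b := by simp [hv]
    have hvj : v j = ε ^ b := by simp [hv, hji]
    have hvl : v l = ε ^ a := by simp [hv, hli, hlj]
    have hk := key v (by rw [hvi, hvj]) (by rw [hvi, hvl]; ring)
    rw [hvi, hvj, hvl] at hk
    first
    | exact hε.pow_inj ha ha' (mul_right_cancel₀ (pow_ne_zero b hε0) hk.1)
    | exact hε.pow_inj hb hb' (mul_left_cancel₀ (pow_ne_zero a hε0)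
        (by rw [mul_comm (ε ^ b') (ε ^ a)] at hk; exact hk.2))
  }
end

section
/- Let k be a field containing a primitive n-th root of unity ε, n ≥ 3, and let L ⊆ k[x_0,…,x_N] be an ideal generated by linear forms of codimension 2 which contains at least three pairwise non-proportional linear forms, each of the shape x_s − ε^c x_t for some s < t and 0 ≤ c < n. Then either L = (x_i − ε^a x_j, x_i − ε^b x_l) for some i < j < l and 0 ≤ a,b < n, or L = (x_i, x_j) for some i < j. -/
open MvPolynomial

noncomputable section

/-- A linear form of the shape `x_s − ε^c x_t` with `s < t`, `0 ≤ c < n` (a linear factor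
of the Fermat arrangement). -/
def IsFermatForm {k : Type*} [Field k] (n N : ℕ) (ε : k)
    (f : MvPolynomial (Fin (N + 1)) k) : Prop :=
  ∃ (s t : Fin (N + 1)) (c : ℕ), s < t ∧ c < n ∧ f = X s - C (ε ^ c) * X t

/-- Two polynomials are proportional if one is a scalar multiple of the other. -/
def Proportional {k : Type*} [Field k] {N : ℕ}
    (f g : MvPolynomial (Fin (N + 1)) k) : Prop :=
  ∃ c : k, g = C c * f

namespace Stmt11Aux

lemma memp1 {R : Type*} [CommSemiring R] (a b : R) : a ∈ Ideal.span {a, b} :=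
  Ideal.subset_span (Set.mem_insert _ _)

lemma memp2 {R : Type*} [CommSemiring R] (a b : R) : b ∈ Ideal.span {a, b} :=
  Ideal.subset_span (Set.mem_insert_of_mem _ rfl)

lemma spanC {k : Type*} [Field k] {σ : Type*} {μ : k} (hμ : μ ≠ 0)
    (a b : MvPolynomial σ k) :
    Ideal.span {a, b} = Ideal.span {a - C μ * b, a} := by
  have hk : (C μ⁻¹ : MvPolynomial σ k) * C μ = 1 := by
    rw [← C_mul, inv_mul_cancel₀ hμ, C_1]
  apply le_antisymm <;> rw [Ideal.span_le] <;> rintro x (rfl | rfl)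
  · exact memp2 _ _
  · have hb : x = C μ⁻¹ * a - C μ⁻¹ * (a - C μ * x) := by
      linear_combination (-x) * hk
    have hmem : C μ⁻¹ * a - C μ⁻¹ * (a - C μ * x) ∈ Ideal.span {a - C μ * x, a} :=
      sub_mem (Ideal.mul_mem_left _ _ (memp2 _ _)) (Ideal.mul_mem_left _ _ (memp1 _ _))
    rw [← hb] at hmem
    exact hmem
  · exact sub_mem (memp1 _ _) (Ideal.mul_mem_left _ _ (memp2 _ _))
  · exact memp1 _ _

lemma powmod {k : Type*} [Field k] {ε : k} {n : ℕ} (hεn : ε ^ n = 1) (m : ℕ) :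
    ε ^ (m % n) = ε ^ m := by
  conv_rhs => rw [← Nat.div_add_mod m n]
  rw [pow_add, pow_mul, hεn, one_pow, one_mul]

end Stmt11Aux

open Stmt11Aux

/-- Let `n ≥ 3`, `ε ∈ k` a primitive `n`-th root of unity, and let
`L ⊆ k[x_0,…,x_N]` be an ideal generated by linear forms whose span of linear forms is
2-dimensional (codimension 2), containing three pairwise non-proportional linear forms of
the Fermat shape `x_s − ε^c x_t`.  Then `L = (x_i − ε^a x_j, x_i − ε^b x_l)` for some
`i < j < l`, `0 ≤ a, b < n`, or `L = (x_i, x_j)` for some `i < j`. -/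
theorem stmt11 {k : Type*} [Field k] {n N : ℕ} (hn : 3 ≤ n) {ε : k}
    (hε : IsPrimitiveRoot ε n) (L : Ideal (MvPolynomial (Fin (N + 1)) k))
    (hgen : ∃ S : Set (MvPolynomial (Fin (N + 1)) k),
      (∀ f ∈ S, MvPolynomial.IsHomogeneous f 1) ∧ L = Ideal.span S)
    (hcodim : Module.finrank k
      ↥(Submodule.span k {f : MvPolynomial (Fin (N + 1)) k |
        f ∈ L ∧ MvPolynomial.IsHomogeneous f 1}) = 2)
    (f₁ f₂ f₃ : MvPolynomial (Fin (N + 1)) k)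
    (hf₁ : f₁ ∈ L) (hf₂ : f₂ ∈ L) (hf₃ : f₃ ∈ L)
    (hF₁ : IsFermatForm n N ε f₁) (hF₂ : IsFermatForm n N ε f₂)
    (hF₃ : IsFermatForm n N ε f₃)
    (h12 : ¬ Proportional f₁ f₂) (h13 : ¬ Proportional f₁ f₃)
    (h23 : ¬ Proportional f₂ f₃) :
    (∃ (i j l : Fin (N + 1)) (a b : ℕ), i < j ∧ j < l ∧ a < n ∧ b < n ∧
        L = Ideal.span {(X i : MvPolynomial (Fin (N + 1)) k) - C (ε ^ a) * X j,
          X i - C (ε ^ b) * X l}) ∨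
      (∃ i j : Fin (N + 1), i < j ∧
        L = Ideal.span {(X i : MvPolynomial (Fin (N + 1)) k), X j}) := by
  classical
  have hn0 : n ≠ 0 := by omega
  have hεn : ε ^ n = 1 := hε.pow_eq_one
  have hε0 : ε ≠ 0 := hε.ne_zero hn0
  obtain ⟨s₁, t₁, c₁, hst₁, hc₁, rfl⟩ := hF₁
  obtain ⟨s₂, t₂, c₂, hst₂, hc₂, rfl⟩ := hF₂
  obtain ⟨s₃, t₃, c₃, hst₃, hc₃, rfl⟩ := hF₃
  -- basic facts
  have hhom : ∀ (s t : Fin (N + 1)) (c : ℕ),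
      ((X s - C (ε ^ c) * X t : MvPolynomial (Fin (N + 1)) k)).IsHomogeneous 1 := by
    intro s t c
    have h2 := (isHomogeneous_C (Fin (N + 1)) (ε ^ c)).mul (isHomogeneous_X k t)
    exact (isHomogeneous_X k s).sub (by simpa using h2)
  have hne : ∀ (s t : Fin (N + 1)) (c : ℕ), s ≠ t →
      (X s - C (ε ^ c) * X t : MvPolynomial (Fin (N + 1)) k) ≠ 0 := by
    intro s t c hst h
    have h' := congrArg (eval (Pi.single s (1 : k))) h
    simp [Pi.single_apply, Ne.symm hst] at h'
  -- the degree-one span is spanned by f₁, f₂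
  set V := Submodule.span k {f : MvPolynomial (Fin (N + 1)) k |
      f ∈ L ∧ MvPolynomial.IsHomogeneous f 1} with hVdef
  have hli : LinearIndependent k
      ![(X s₁ - C (ε ^ c₁) * X t₁ : MvPolynomial (Fin (N + 1)) k),
        X s₂ - C (ε ^ c₂) * X t₂] :=
    (LinearIndependent.pair_iff' (hne s₁ t₁ c₁ hst₁.ne)).2
      (fun a ha => h12 ⟨a, by rw [← ha, smul_eq_C_mul]⟩)
  have hr : Set.range ![(X s₁ - C (ε ^ c₁) * X t₁ : MvPolynomial (Fin (N + 1)) k),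
      X s₂ - C (ε ^ c₂) * X t₂] = {X s₁ - C (ε ^ c₁) * X t₁, X s₂ - C (ε ^ c₂) * X t₂} := by
    ext x
    simp only [Set.mem_range, Fin.exists_fin_two, Matrix.cons_val_zero, Matrix.cons_val_one,
      Matrix.head_cons, Set.mem_insert_iff, Set.mem_singleton_iff, eq_comm]
  have h2' : Module.finrank k ↥(Submodule.span k
      {(X s₁ - C (ε ^ c₁) * X t₁ : MvPolynomial (Fin (N + 1)) k),
        X s₂ - C (ε ^ c₂) * X t₂}) = 2 := by
    rw [← hr, finrank_span_eq_card hli, Fintype.card_fin]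
  have hfd : FiniteDimensional k V := FiniteDimensional.of_finrank_pos (by rw [hcodim]; omega)
  have hsub : Submodule.span k
      {(X s₁ - C (ε ^ c₁) * X t₁ : MvPolynomial (Fin (N + 1)) k),
        X s₂ - C (ε ^ c₂) * X t₂} ≤ V := by
    apply Submodule.span_le.2
    rintro x (rfl | rfl)
    · exact Submodule.subset_span ⟨hf₁, hhom _ _ _⟩
    · exact Submodule.subset_span ⟨hf₂, hhom _ _ _⟩
  have hVeq : Submodule.span k
      {(X s₁ - C (ε ^ c₁) * X t₁ : MvPolynomial (Fin (N + 1)) k),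
        X s₂ - C (ε ^ c₂) * X t₂} = V := by
    apply Submodule.eq_of_le_of_finrank_le hsub
    rw [hcodim, h2']
  -- L is generated by f₁, f₂
  have hLeq : L = Ideal.span {(X s₁ - C (ε ^ c₁) * X t₁ : MvPolynomial (Fin (N + 1)) k),
      X s₂ - C (ε ^ c₂) * X t₂} := by
    obtain ⟨S, hS1, hS2⟩ := hgen
    apply le_antisymm
    · rw [hS2, Ideal.span_le]
      intro g hg
      have hgL : g ∈ L := by rw [hS2]; exact Ideal.subset_span hg
      have hgV : g ∈ V := Submodule.subset_span ⟨hgL, hS1 g hg⟩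
      rw [← hVeq] at hgV
      obtain ⟨a, b, hab⟩ := Submodule.mem_span_pair.1 hgV
      rw [← hab, smul_eq_C_mul, smul_eq_C_mul]
      exact Ideal.add_mem _ (Ideal.mul_mem_left _ _ (memp1 _ _))
        (Ideal.mul_mem_left _ _ (memp2 _ _))
    · rw [Ideal.span_le]
      rintro x (rfl | rfl)
      exacts [hf₁, hf₂]
  by_cases hss : s₁ = s₂
  · subst hss
    by_cases htt : t₁ = t₂
    · subst htt
      -- Case A : L = (X s₁, X t₁)
      right
      refine ⟨s₁, t₁, hst₁, ?_⟩
      have hcc : c₁ ≠ c₂ := by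
        intro h
        exact h12 ⟨1, by rw [h, C_1, one_mul]⟩
      have hεcc : (ε ^ c₂ - ε ^ c₁ : k) ≠ 0 :=
        sub_ne_zero.2 fun h => hcc (hε.pow_inj hc₁ hc₂ h.symm)
      have hXt : (X t₁ : MvPolynomial (Fin (N + 1)) k) ∈
          Ideal.span {(X s₁ - C (ε ^ c₁) * X t₁ : MvPolynomial (Fin (N + 1)) k),
            X s₁ - C (ε ^ c₂) * X t₁} := by
        have hkey : (C ((ε ^ c₂ - ε ^ c₁)⁻¹) : MvPolynomial (Fin (N + 1)) k) *
            (C (ε ^ c₂) - C (ε ^ c₁)) = 1 := by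
          rw [← C_sub, ← C_mul, inv_mul_cancel₀ hεcc, C_1]
        have hid : (X t₁ : MvPolynomial (Fin (N + 1)) k) =
            C ((ε ^ c₂ - ε ^ c₁)⁻¹) * (X s₁ - C (ε ^ c₁) * X t₁) -
              C ((ε ^ c₂ - ε ^ c₁)⁻¹) * (X s₁ - C (ε ^ c₂) * X t₁) := by
          linear_combination (-(X t₁ : MvPolynomial (Fin (N + 1)) k)) * hkey
        have hmem := sub_mem (Ideal.mul_mem_left _ (C ((ε ^ c₂ - ε ^ c₁)⁻¹)) (memp1
            (X s₁ - C (ε ^ c₁) * X t₁ : MvPolynomial (Fin (N + 1)) k)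
            (X s₁ - C (ε ^ c₂) * X t₁)))
          (Ideal.mul_mem_left _ (C ((ε ^ c₂ - ε ^ c₁)⁻¹)) (memp2
            (X s₁ - C (ε ^ c₁) * X t₁ : MvPolynomial (Fin (N + 1)) k)
            (X s₁ - C (ε ^ c₂) * X t₁)))
        rw [← hid] at hmem
        exact hmem
      rw [hLeq]
      apply le_antisymm <;> rw [Ideal.span_le] <;> rintro x (rfl | rfl)
      · exact sub_mem (memp1 _ _) (Ideal.mul_mem_left _ _ (memp2 _ _))
      · exact sub_mem (memp1 _ _) (Ideal.mul_mem_left _ _ (memp2 _ _))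
      · have hid : (X s₁ : MvPolynomial (Fin (N + 1)) k) =
            (X s₁ - C (ε ^ c₁) * X t₁) + C (ε ^ c₁) * X t₁ := by ring
        have hmem := add_mem (memp1
            (X s₁ - C (ε ^ c₁) * X t₁ : MvPolynomial (Fin (N + 1)) k)
            (X s₁ - C (ε ^ c₂) * X t₁))
          (Ideal.mul_mem_left _ (C (ε ^ c₁)) hXt)
        rw [← hid] at hmem
        exact hmem
      · exact hXt
    · -- Case B : same source variable
      left
      rcases lt_or_gt_of_ne (fun h : t₁ = t₂ => htt h) with h | h
      · exact ⟨s₁, t₁, t₂, c₁, c₂, hst₁, h, hc₁, hc₂, by rw [hLeq]⟩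
      · refine ⟨s₁, t₂, t₁, c₂, c₁, hst₂, h, hc₂, hc₁, ?_⟩
        rw [hLeq, Set.pair_comm]
  · by_cases htt : t₁ = t₂
    · subst htt
      -- Case C : same target variable
      left
      rcases lt_or_gt_of_ne (fun h : s₁ = s₂ => hss h) with h | h
      · refine ⟨s₁, s₂, t₁, (c₁ + n - c₂) % n, c₁, h, hst₂,
          Nat.mod_lt _ (by omega), hc₁, ?_⟩
        have hkey : (C (ε ^ ((c₁ + n - c₂) % n)) : MvPolynomial (Fin (N + 1)) k) *
            C (ε ^ c₂) = C (ε ^ c₁) := by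
          rw [← C_mul, powmod hεn, ← pow_add,
            show c₁ + n - c₂ + c₂ = c₁ + n by omega, pow_add, hεn, mul_one]
        have hid : (X s₁ - C (ε ^ c₁) * X t₁ : MvPolynomial (Fin (N + 1)) k) -
            C (ε ^ ((c₁ + n - c₂) % n)) * (X s₂ - C (ε ^ c₂) * X t₁) =
            X s₁ - C (ε ^ ((c₁ + n - c₂) % n)) * X s₂ := by
          linear_combination (X t₁ : MvPolynomial (Fin (N + 1)) k) * hkey
        rw [hLeq, spanC (pow_ne_zero ((c₁ + n - c₂) % n) hε0), hid, Set.pair_comm]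
      · refine ⟨s₂, s₁, t₁, (c₂ + n - c₁) % n, c₂, h, hst₁,
          Nat.mod_lt _ (by omega), hc₂, ?_⟩
        have hkey : (C (ε ^ ((c₂ + n - c₁) % n)) : MvPolynomial (Fin (N + 1)) k) *
            C (ε ^ c₁) = C (ε ^ c₂) := by
          rw [← C_mul, powmod hεn, ← pow_add,
            show c₂ + n - c₁ + c₁ = c₂ + n by omega, pow_add, hεn, mul_one]
        have hid : (X s₂ - C (ε ^ c₂) * X t₁ : MvPolynomial (Fin (N + 1)) k) -
            C (ε ^ ((c₂ + n - c₁) % n)) * (X s₁ - C (ε ^ c₁) * X t₁) =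
            X s₂ - C (ε ^ ((c₂ + n - c₁) % n)) * X s₁ := by
          linear_combination (X t₁ : MvPolynomial (Fin (N + 1)) k) * hkey
        rw [hLeq, Set.pair_comm, spanC (pow_ne_zero ((c₂ + n - c₁) % n) hε0), hid,
          Set.pair_comm]
    · by_cases hts : t₁ = s₂
      · subst hts
        -- Case D : chain s₁ < t₁ < t₂
        left
        refine ⟨s₁, t₁, t₂, c₁, (c₁ + c₂) % n, hst₁, hst₂, hc₁,
          Nat.mod_lt _ (by omega), ?_⟩
        have hkey : (C (ε ^ ((c₁ + c₂) % n)) : MvPolynomial (Fin (N + 1)) k) =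
            C (ε ^ c₁) * C (ε ^ c₂) := by
          rw [← C_mul, ← pow_add, powmod hεn]
        have hid : (X s₁ - C (ε ^ c₁) * X t₁ : MvPolynomial (Fin (N + 1)) k) -
            C (-(ε ^ c₁)) * (X t₁ - C (ε ^ c₂) * X t₂) =
            X s₁ - C (ε ^ ((c₁ + c₂) % n)) * X t₂ := by
          rw [map_neg]
          linear_combination (X t₂ : MvPolynomial (Fin (N + 1)) k) * hkey
        rw [hLeq, spanC (neg_ne_zero.2 (pow_ne_zero c₁ hε0)), hid, Set.pair_comm]
      · by_cases hst : s₁ = t₂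
        · -- Case D' : chain s₂ < s₁ < t₁
          subst hst
          left
          refine ⟨s₂, s₁, t₁, c₂, (c₂ + c₁) % n, hst₂, hst₁, hc₂,
            Nat.mod_lt _ (by omega), ?_⟩
          have hkey : (C (ε ^ ((c₂ + c₁) % n)) : MvPolynomial (Fin (N + 1)) k) =
              C (ε ^ c₂) * C (ε ^ c₁) := by
            rw [← C_mul, ← pow_add, powmod hεn]
          have hid : (X s₂ - C (ε ^ c₂) * X s₁ : MvPolynomial (Fin (N + 1)) k) -
              C (-(ε ^ c₂)) * (X s₁ - C (ε ^ c₁) * X t₁) =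
              X s₂ - C (ε ^ ((c₂ + c₁) % n)) * X t₁ := by
            rw [map_neg]
            linear_combination (X t₁ : MvPolynomial (Fin (N + 1)) k) * hkey
          rw [hLeq, Set.pair_comm, spanC (neg_ne_zero.2 (pow_ne_zero c₂ hε0)), hid,
            Set.pair_comm]
        · -- Case E : disjoint supports, contradiction via f₃
          exfalso
          have hf₃V : (X s₃ - C (ε ^ c₃) * X t₃ : MvPolynomial (Fin (N + 1)) k) ∈
              Submodule.span k
                {(X s₁ - C (ε ^ c₁) * X t₁ : MvPolynomial (Fin (N + 1)) k),
                  X s₂ - C (ε ^ c₂) * X t₂} := by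
            rw [hVeq]
            exact Submodule.subset_span ⟨hf₃, hhom _ _ _⟩
          obtain ⟨α, β, hαβ⟩ := Submodule.mem_span_pair.1 hf₃V
          rw [smul_eq_C_mul, smul_eq_C_mul] at hαβ
          have hα : α ≠ 0 := by
            rintro rfl
            refine h23 ⟨β, ?_⟩
            rw [← hαβ]
            simp
          have hβ : β ≠ 0 := by
            rintro rfl
            refine h13 ⟨α, ?_⟩
            rw [← hαβ]
            simp
          have hεc₁ : (ε : k) ^ c₁ ≠ 0 := pow_ne_zero _ hε0
          by_cases hA : s₃ = s₁ ∨ t₃ = s₁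
          · by_cases hB : s₃ = t₁ ∨ t₃ = t₁
            · rcases hA with hA | hA <;> rcases hB with hB | hB
              · exact hst₁.ne (hA.symm.trans hB)
              · subst hA; subst hB
                have h := congrArg (eval (Pi.single s₂ (1 : k))) hαβ
                simp [Pi.single_apply, hss, hts, hst₂.ne', hβ] at h
              · subst hA; subst hB
                exact lt_asymm hst₁ hst₃
              · exact hst₁.ne (hA.symm.trans hB)
            · push_neg at hB
              have h := congrArg (eval (Pi.single t₁ (1 : k))) hαβ
              simp [Pi.single_apply, hst₁.ne, Ne.symm hts, Ne.symm htt, hB.1, hB.2,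
                hα, hεc₁] at h
          · push_neg at hA
            have h := congrArg (eval (Pi.single s₁ (1 : k))) hαβ
            simp [Pi.single_apply, hst₁.ne', hss, Ne.symm hst, hA.1, hA.2, hα] at h

end
end
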